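/- arXiv:2009.01765 — 4 statements merged into one kernel-verified Lean document; each statement's English description precedes it below -/
import Mathlib

section
/- An allotment A of an LBDD instance is optimal if and only if A does not induce any negative loop. -/
open Finset

/-- Cyclic successor on `Fin n`. -/
def cnext {n : ℕ} (t : Fin n) : Fin n := ⟨(t.val + 1) % n, Nat.mod_lt _ t.pos⟩

section LBDD

variable {D S : Type*} [Fintype D] [DecidableEq D] [Fintype S] [DecidableEq S]

/-- Occupancy of a service center `s` under allotment `A`: the number of demand
units assigned to `s`. -/
def occ (A : D → S) (s : S) : ℕ := (Finset.univ.filter fun d => A d = s).card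

/-- Total cost of an allotment: assignment costs plus accumulated per-allotment penalties. -/
def cost (CM : D → S → ℤ) (p : S → ℕ → ℤ) (A : D → S) : ℤ :=
  (∑ d, CM d (A d)) + ∑ s, ∑ j ∈ Finset.Icc 1 (occ A s), p s j

/-- Weight of the penalty transfer edge from `si` to `sj` under allotment `A`. -/
def wpen (p : S → ℕ → ℤ) (A : D → S) (si sj : S) : ℤ :=
  p si (occ A si + 1) - p sj (occ A sj)

/-- A loop: a cyclic sequence of `m` edges; edge `t` is directed from `vtx t` to
`vtx (cnext t)`; if `dem t = some d` it is a transfer edge moving demand unit `d`,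
and if `dem t = none` it is a penalty transfer edge. -/
structure Loop (S D : Type*) where
  m : ℕ
  vtx : Fin m → S
  dem : Fin m → Option D

/-- `L` is a loop of allotment `A`: at least two pairwise distinct service centers,
each transfer edge moves a demand unit currently assigned to its tail, the demand
units are pairwise distinct, and there is at most one penalty transfer edge
(no penalty edge: type (i), a cycle of transfer edges; one penalty edge: type (ii),
a path of transfer edges closed by a penalty transfer edge). -/
def IsLoop (A : D → S) (L : Loop S D) : Prop :=
  2 ≤ L.m ∧ Function.Injective L.vtx ∧
  (∀ t d, L.dem t = some d → A d = L.vtx t) ∧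
  (∀ t t' d, L.dem t = some d → L.dem t' = some d → t = t') ∧
  (∀ t t', L.dem t = none → L.dem t' = none → t = t')

/-- Weight of edge `t` of loop `L`. -/
def edgeWt (CM : D → S → ℤ) (p : S → ℕ → ℤ) (A : D → S) (L : Loop S D) (t : Fin L.m) : ℤ :=
  match L.dem t with
  | some d => CM d (L.vtx (cnext t)) - CM d (L.vtx t)
  | none => wpen p A (L.vtx t) (L.vtx (cnext t))

/-- Cost of a loop: the sum of the weights of its edges. -/
def loopCost (CM : D → S → ℤ) (p : S → ℕ → ℤ) (A : D → S) (L : Loop S D) : ℤ :=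
  ∑ t, edgeWt CM p A L t

/-- `A` induces a negative loop. -/
def InducesNegLoop (CM : D → S → ℤ) (p : S → ℕ → ℤ) (A : D → S) : Prop :=
  ∃ L : Loop S D, IsLoop A L ∧ loopCost CM p A L < 0

/-- Removing a loop from `A`: for each transfer edge, reassign its demand unit
from the tail to the head of the edge. -/
noncomputable def removeLoop (A : D → S) (L : Loop S D) : D → S := fun x =>
  if h : ∃ t, L.dem t = some x then L.vtx (cnext (Classical.choose h)) else A x

end LBDD


/-!
Removing a loop `L` from `A` (moving each of its demand units one step along `L`) changes the
cost by exactly the cost of `L`: a transfer edge changes the assignment cost by its weight, and a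
closing penalty edge from `s_j` to `s_i` shifts one unit of occupancy from `s_i` to `s_j`, which
changes the penalties by its weight. Hence an optimal allotment has no negative loop.

Conversely, let `B ≠ A`. The units that `A` and `B` place differently are the edges of a digraph
on the service centers in which a center that receives an edge but is not fuller under `B` than
under `A` also sends one, and symmetrically. Extending a simple path edge by edge therefore
produces a simple cycle or a simple path from a center that is emptier under `B` to one that is
fuller under `B`; either is a loop `L` of `A`. Putting the units of `L` back where `A` has them
gives an allotment `B'` closer to `A` with `B = removeLoop B' L`. As penalties are nondecreasing,
the cost of `L` at `B'` is at least its cost at `A`, which is nonnegative, so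
`cost B ≥ cost B' ≥ cost A` by induction on the number of units placed differently.
-/

lemma cnext_eq_finRotate {n : ℕ} (t : Fin n) : cnext t = finRotate n t := by
  rw [finRotate_apply]
  ext
  obtain ⟨k, rfl⟩ : ∃ k, n = k + 1 := Nat.exists_eq_succ_of_ne_zero t.pos.ne'
  simp [cnext, Fin.val_add]

lemma sum_comp_cnext {M : Type*} [AddCommMonoid M] {n : ℕ} (f : Fin n → M) :
    ∑ t, f (cnext t) = ∑ t, f t := by
  simp_rw [cnext_eq_finRotate]
  exact Equiv.sum_comp _ f

lemma val_cnext_of_lt {n : ℕ} {t : Fin n} (h : t.val + 1 < n) : (cnext t).val = t.val + 1 :=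
  Nat.mod_eq_of_lt h

lemma val_cnext_of_eq {n : ℕ} {t : Fin n} (h : t.val + 1 = n) : (cnext t).val = 0 := by
  simp [cnext, h]

lemma cnext_ne_self {n : ℕ} (hn : 2 ≤ n) (t : Fin n) : cnext t ≠ t := by
  intro h
  rcases Nat.lt_or_ge (t.val + 1) n with ht | ht
  · have := val_cnext_of_lt ht
    rw [h] at this
    omega
  · have := val_cnext_of_eq (by have := t.isLt; omega : t.val + 1 = n)
    rw [h] at this
    omega

lemma List.IsChain.rel_getElem_cnext {α : Type*} {R : α → α → Prop} {l : List α}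
    (hc : l.IsChain R) (t : Fin l.length) (ht : t.val + 1 < l.length) : R l[t] l[cnext t] := by
  simpa [val_cnext_of_lt ht] using List.isChain_iff_getElem.1 hc t ht

lemma getElem_cnext_of_val_add_one_eq {α : Type*} {l : List α} {t : Fin l.length}
    (ht : t.val + 1 = l.length) : l[cnext t] = l[0]'(by omega) ∧ l[t] = l[l.length - 1] :=
  ⟨by simp only [Fin.getElem_fin, val_cnext_of_eq ht],
    by simp only [Fin.getElem_fin, show t.val = l.length - 1 by omega]⟩

lemma monotone_of_eq_zero_of_pos_of_le_succ {f : ℕ → ℤ} {c : ℕ} (h0 : ∀ j, j ≤ c → f j = 0)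
    (hpos : ∀ j, c < j → 0 < f j) (hle : ∀ j, c < j → f j ≤ f (j + 1)) : Monotone f := by
  refine monotone_nat_of_le_succ fun j => ?_
  rcases lt_or_ge c j with hj | hj
  · exact hle j hj
  · rw [h0 j hj]
    rcases eq_or_lt_of_le hj with rfl | hj
    · exact (hpos _ (by omega)).le
    · exact (h0 _ hj).ge

section Paths

variable {α : Type*} {R : α → α → Prop}

def IsSimpleCycle (R : α → α → Prop) (l : List α) : Prop :=
  l.Nodup ∧ l.IsChain R ∧ ∃ _ : 2 ≤ l.length, R l[l.length - 1] l[0]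

lemma IsSimpleCycle.reverse {l : List α} (h : IsSimpleCycle (flip R) l) :
    IsSimpleCycle R l.reverse := by
  obtain ⟨hl, hc, h2, hR⟩ := h
  refine ⟨List.nodup_reverse.2 hl, List.isChain_reverse.2 hc, by simpa using h2, ?_⟩
  simpa [List.getElem_reverse, flip] using hR

lemma isSimpleCycle_or_append_singleton (hirr : ∀ a, ¬R a a) {l : List α} (hl : l.Nodup)
    (hc : l.IsChain R) (hpos : 0 < l.length) {w : α} (hw : R l[l.length - 1] w) :
    (∃ l', IsSimpleCycle R l') ∨ (l ++ [w]).Nodup ∧ (l ++ [w]).IsChain R := by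
  by_cases hmem : w ∈ l
  · obtain ⟨j, hj, rfl⟩ := List.getElem_of_mem hmem
    have hjlast : j ≠ l.length - 1 := fun h => hirr _ (by simpa [h] using hw)
    refine Or.inl ⟨l.drop j, hl.sublist (List.drop_sublist _ _), hc.drop _,
      by simp; omega, ?_⟩
    simpa [show j + (l.length - j - 1) = l.length - 1 by omega] using hw
  · refine Or.inr ⟨List.nodup_append.2 ⟨hl, by simp, by grind⟩,
      List.isChain_append.2 ⟨hc, by simp, ?_⟩⟩
    simpa [List.getLast?_eq_getElem?,
      List.getElem?_eq_getElem (by omega : l.length - 1 < l.length)] using hw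

lemma isSimpleCycle_or_cons (hirr : ∀ a, ¬R a a) {l : List α} (hl : l.Nodup)
    (hc : l.IsChain R) (hpos : 0 < l.length) {w : α} (hw : R w l[0]) :
    (∃ l', IsSimpleCycle R l') ∨ (w :: l).Nodup ∧ (w :: l).IsChain R := by
  rcases isSimpleCycle_or_append_singleton (R := flip R) hirr (List.nodup_reverse.2 hl)
      (List.isChain_reverse.2 hc) (by simpa using hpos) (w := w)
      (by simpa [List.getElem_reverse, flip] using hw) with ⟨l', hl'⟩ | ⟨hn, hc'⟩
  · exact Or.inl ⟨_, hl'.reverse⟩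
  · exact Or.inr ⟨by simpa using List.nodup_reverse.2 hn,
      by simpa [flip] using List.isChain_reverse.2 hc'⟩

theorem exists_isSimpleCycle_or_path [Fintype α] (hirr : ∀ a, ¬R a a) {X Y : α → Prop}
    (hout : ∀ a b, R a b → ¬Y b → ∃ c, R b c) (hin : ∀ a b, R a b → ¬X a → ∃ c, R c a)
    {a b : α} (hab : R a b) :
    (∃ l, IsSimpleCycle R l) ∨
      ∃ l : List α, l.Nodup ∧ l.IsChain R ∧ ∃ _ : 2 ≤ l.length, X l[0] ∧ Y l[l.length - 1] := by
  set Goal := (∃ l, IsSimpleCycle R l) ∨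
      ∃ l : List α, l.Nodup ∧ l.IsChain R ∧ ∃ _ : 2 ≤ l.length, X l[0] ∧ Y l[l.length - 1]
  have hstep : ∀ l : List α, l.Nodup → l.IsChain R → 2 ≤ l.length →
      Goal ∨ ∃ l' : List α, l'.Nodup ∧ l'.IsChain R ∧ l.length < l'.length := by
    intro l hl hc h2
    have hrel := List.isChain_iff_getElem.1 hc
    by_cases hY : Y l[l.length - 1]
    · by_cases hX : X l[0]
      · exact Or.inl (Or.inr ⟨l, hl, hc, h2, hX, hY⟩)
      obtain ⟨w, hw⟩ := hin _ _ (hrel 0 (by omega)) hX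
      rcases isSimpleCycle_or_cons hirr hl hc (by omega) hw with hcyc | ⟨hl', hc'⟩
      · exact Or.inl (Or.inl hcyc)
      · exact Or.inr ⟨_, hl', hc', by simp⟩
    · have hlast : l.length - 2 + 1 = l.length - 1 := by omega
      obtain ⟨w, hw⟩ := hout _ _ (hrel (l.length - 2) (by omega)) (by simpa [hlast] using hY)
      rcases isSimpleCycle_or_append_singleton hirr hl hc (by omega)
        (by simpa [hlast] using hw) with hcyc | ⟨hl', hc'⟩
      · exact Or.inl (Or.inl hcyc)
      · exact Or.inr ⟨_, hl', hc', by simp⟩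
  suffices h : ∀ n (l : List α), l.Nodup → l.IsChain R → 2 ≤ l.length →
      Fintype.card α < l.length + n → Goal from
    h (Fintype.card α) [a, b] (by simp; rintro rfl; exact hirr a hab) (List.isChain_pair.2 hab)
      le_rfl (by simp)
  intro n
  induction n with
  | zero => exact fun l hl _ _ hcard => absurd hl.length_le_card (by omega)
  | succ n ih =>
    intro l hl hc h2 hcard
    rcases hstep l hl hc h2 with hgoal | ⟨l', hl', hc', hlen⟩
    · exact hgoal
    · exact ih l' hl' hc' (by omega) (by omega)

end Paths

def penalty {S : Type*} (p : S → ℕ → ℤ) (s : S) (n : ℕ) : ℤ := ∑ j ∈ Icc 1 n, p s j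

lemma penalty_succ {S : Type*} (p : S → ℕ → ℤ) (s : S) (n : ℕ) :
    penalty p s (n + 1) = penalty p s n + p s (n + 1) :=
  sum_Icc_succ_top (by omega) _

lemma cost_eq_add_sum_penalty {D S : Type*} [Fintype D] [Fintype S] [DecidableEq S]
    (CM : D → S → ℤ) (p : S → ℕ → ℤ) (A : D → S) :
    cost CM p A = ∑ d, CM d (A d) + ∑ s, penalty p s (occ A s) := rfl

lemma sum_penalty_of_move {S : Type*} [Fintype S] [DecidableEq S] (p : S → ℕ → ℤ)
    {o o' : S → ℕ} {u w : S} (huw : u ≠ w)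
    (h : ∀ s, (o' s : ℤ) = o s + ((if u = s then 1 else 0) - if w = s then 1 else 0)) :
    ∑ s, penalty p s (o' s) = ∑ s, penalty p s (o s) + (p u (o u + 1) - p w (o w)) := by
  have hs : ∀ s, penalty p s (o' s) - penalty p s (o s)
      = (if u = s then p u (o u + 1) else 0) - if w = s then p w (o w) else 0 := by
    intro s
    have hs := h s
    by_cases hu : u = s
    · subst hu
      simp only [if_pos, if_neg huw.symm] at hs ⊢
      rw [show o' u = o u + 1 by omega, penalty_succ]
      ring
    by_cases hw : w = s
    · subst hw
      simp only [if_pos, if_neg hu] at hs ⊢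
      rw [show o w = o' w + 1 by omega, penalty_succ]
      ring
    simp only [if_neg hu, if_neg hw] at hs ⊢
    rw [show o' s = o s by omega]
    ring
  rw [← sub_eq_iff_eq_add', ← sum_sub_distrib, sum_congr rfl fun s _ => hs s, sum_sub_distrib,
    sum_ite_eq, sum_ite_eq, if_pos (mem_univ _), if_pos (mem_univ _)]

lemma natCast_occ {D S : Type*} [Fintype D] [DecidableEq S] (A : D → S) (s : S) :
    (occ A s : ℤ) = ∑ d, if A d = s then 1 else 0 :=
  natCast_card_filter _ _

section LoopRemoval

variable {D S : Type*} {A : D → S} {L : Loop S D}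

lemma IsLoop.exists_dem_eq_some (hL : IsLoop A L) : ∃ t d, L.dem t = some d := by
  by_contra! h
  have h0 := hL.2.2.2.2 ⟨0, by have := hL.1; omega⟩ ⟨1, hL.1⟩
    (Option.eq_none_iff_forall_ne_some.2 (h _)) (Option.eq_none_iff_forall_ne_some.2 (h _))
  simp at h0

lemma IsLoop.vtx_ne_vtx_cnext (hL : IsLoop A L) (t : Fin L.m) : L.vtx t ≠ L.vtx (cnext t) :=
  hL.2.1.ne (cnext_ne_self hL.1 t).symm

lemma filter_dem_eq_none (hL : IsLoop A L) {t₀ : Fin L.m} (ht₀ : L.dem t₀ = none) :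
    univ.filter (fun t => L.dem t = none) = {t₀} :=
  eq_singleton_iff_unique_mem.2 ⟨by simpa using ht₀,
    fun t ht => hL.2.2.2.2 _ _ (by simpa using ht) ht₀⟩

-- A sum over `(L.dem t).toFinset` keeps the transfer edges and drops the penalty edge.
lemma sum_toFinset_dem_add_sum_filter {M : Type*} [AddCommMonoid M] (c : Fin L.m → M) :
    ∑ t, ∑ _d ∈ (L.dem t).toFinset, c t + ∑ t ∈ univ.filter (fun t => L.dem t = none), c t
      = ∑ t, c t := by
  rw [sum_filter, ← sum_add_distrib]
  refine sum_congr rfl fun t _ => ?_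
  cases L.dem t <;> simp

lemma loopCost_eq_add [Fintype D] [DecidableEq S] (CM : D → S → ℤ) (p : S → ℕ → ℤ) :
    loopCost CM p A L = ∑ t, ∑ d ∈ (L.dem t).toFinset, (CM d (L.vtx (cnext t)) - CM d (L.vtx t))
      + ∑ t ∈ univ.filter (fun t => L.dem t = none), wpen p A (L.vtx t) (L.vtx (cnext t)) := by
  rw [loopCost, sum_filter, ← sum_add_distrib]
  refine sum_congr rfl fun t _ => ?_
  unfold edgeWt
  cases L.dem t <;> simp

variable [DecidableEq D]

lemma removeLoop_of_dem_eq_some (hL : IsLoop A L) {t : Fin L.m} {d : D} (h : L.dem t = some d) :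
    removeLoop A L d = L.vtx (cnext t) := by
  have hex : ∃ t, L.dem t = some d := ⟨t, h⟩
  rw [removeLoop, dif_pos hex]
  exact congrArg (fun t => L.vtx (cnext t)) (hL.2.2.2.1 _ _ _ hex.choose_spec h)

lemma removeLoop_of_forall_ne {d : D} (h : ∀ t, L.dem t ≠ some d) : removeLoop A L d = A d :=
  dif_neg (not_exists.2 h)

lemma sum_removeLoop_sub [Fintype D] (hL : IsLoop A L) (g : D → S → ℤ) :
    ∑ d, (g d (removeLoop A L d) - g d (A d))
      = ∑ t, ∑ d ∈ (L.dem t).toFinset, (g d (L.vtx (cnext t)) - g d (L.vtx t)) := by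
  rw [sum_comm' (t' := univ) (s' := fun d => univ.filter fun t => L.dem t = some d)
    (by simp [eq_comm])]
  refine sum_congr rfl fun d _ => ?_
  by_cases hd : ∃ t, L.dem t = some d
  · obtain ⟨t, ht⟩ := hd
    have hfilter : univ.filter (fun t => L.dem t = some d) = {t} :=
      eq_singleton_iff_unique_mem.2 ⟨by simpa using ht,
        fun t' ht' => hL.2.2.2.1 _ _ _ (by simpa using ht') ht⟩
    rw [hfilter, sum_singleton, removeLoop_of_dem_eq_some hL ht, hL.2.2.1 t d ht]
  · push Not at hd
    rw [removeLoop_of_forall_ne hd, filter_false_of_mem fun t _ => hd t, sum_empty, sub_self]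

variable [Fintype D] [DecidableEq S]

lemma occ_removeLoop (hL : IsLoop A L) (s : S) :
    (occ (removeLoop A L) s : ℤ) = occ A s + ∑ t ∈ univ.filter (fun t => L.dem t = none),
      ((if L.vtx t = s then 1 else 0) - if L.vtx (cnext t) = s then 1 else 0) := by
  set c : Fin L.m → ℤ := fun t =>
    (if L.vtx (cnext t) = s then 1 else 0) - if L.vtx t = s then 1 else 0
  have hsum : (occ (removeLoop A L) s : ℤ) - occ A s = ∑ t, ∑ _d ∈ (L.dem t).toFinset, c t := by
    rw [natCast_occ, natCast_occ, ← sum_sub_distrib]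
    exact sum_removeLoop_sub hL fun _ s' => if s' = s then 1 else 0
  have hcycle : ∑ t, c t = 0 := by
    rw [sum_sub_distrib, sum_comp_cnext fun t => if L.vtx t = s then (1 : ℤ) else 0, sub_self]
  have hneg : ∑ t ∈ univ.filter (fun t => L.dem t = none),
      ((if L.vtx t = s then (1 : ℤ) else 0) - if L.vtx (cnext t) = s then 1 else 0)
        = -∑ t ∈ univ.filter (fun t => L.dem t = none), c t := by
    rw [← sum_neg_distrib]
    simp [c]
  linarith [sum_toFinset_dem_add_sum_filter (L := L) c]

lemma occ_removeLoop_of_dem_eq_none (hL : IsLoop A L) {t₀ : Fin L.m} (ht₀ : L.dem t₀ = none)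
    (s : S) : (occ (removeLoop A L) s : ℤ) = occ A s
      + ((if L.vtx t₀ = s then 1 else 0) - if L.vtx (cnext t₀) = s then 1 else 0) := by
  rw [occ_removeLoop hL, filter_dem_eq_none hL ht₀, sum_singleton]

lemma occ_removeLoop_of_forall_dem_ne_none (hL : IsLoop A L) (h : ∀ t, L.dem t ≠ none) (s : S) :
    occ (removeLoop A L) s = occ A s := by
  have := occ_removeLoop hL s
  rw [filter_false_of_mem fun t _ => h t, sum_empty, add_zero] at this
  exact_mod_cast this

variable [Fintype S]

lemma sum_penalty_removeLoop (hL : IsLoop A L) (p : S → ℕ → ℤ) :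
    ∑ s, penalty p s (occ (removeLoop A L) s) = ∑ s, penalty p s (occ A s)
      + ∑ t ∈ univ.filter (fun t => L.dem t = none), wpen p A (L.vtx t) (L.vtx (cnext t)) := by
  by_cases h : ∃ t₀, L.dem t₀ = none
  · obtain ⟨t₀, ht₀⟩ := h
    rw [filter_dem_eq_none hL ht₀, sum_singleton]
    exact sum_penalty_of_move p (hL.vtx_ne_vtx_cnext t₀)
      (occ_removeLoop_of_dem_eq_none hL ht₀)
  · push Not at h
    simp [occ_removeLoop_of_forall_dem_ne_none hL h, filter_false_of_mem fun t _ => h t]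

theorem cost_removeLoop (hL : IsLoop A L) (CM : D → S → ℤ) (p : S → ℕ → ℤ) :
    cost CM p (removeLoop A L) = cost CM p A + loopCost CM p A L := by
  have hCM := sum_removeLoop_sub hL CM
  rw [sum_sub_distrib] at hCM
  rw [cost_eq_add_sum_penalty, cost_eq_add_sum_penalty, sum_penalty_removeLoop hL,
    loopCost_eq_add, ← hCM]
  ring

end LoopRemoval
section Extraction

variable {D S : Type*}

def Transfer (A B : D → S) (u v : S) : Prop := u ≠ v ∧ ∃ d, A d = u ∧ B d = v

lemma Transfer.swap {A B : D → S} {u v : S} (h : Transfer A B u v) : Transfer B A v u :=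
  ⟨h.1.symm, h.2.imp fun _ hd => hd.symm⟩

open Classical in
noncomputable def transferLoop (A B : D → S) (l : List S) : Loop S D where
  m := l.length
  vtx t := l[t]
  dem t := if h : Transfer A B l[t] l[cnext t] then some h.2.choose else none

lemma transferLoop_dem_eq_some {A B : D → S} {l : List S} {t : Fin l.length} {d : D}
    (h : (transferLoop A B l).dem t = some d) : A d = l[t] ∧ B d = l[cnext t] := by
  simp only [transferLoop] at h
  split at h
  · next hT => exact Option.some_inj.1 h ▸ hT.2.choose_spec
  · simp at h

lemma not_transfer_of_transferLoop_dem_eq_none {A B : D → S} {l : List S} {t : Fin l.length}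
    (h : (transferLoop A B l).dem t = none) : ¬Transfer A B l[t] l[cnext t] := by
  simp only [transferLoop] at h
  split at h
  · simp at h
  · assumption

lemma isLoop_transferLoop {A B : D → S} {l : List S} (hl : l.Nodup) (h2 : 2 ≤ l.length)
    (hT : ∀ t : Fin l.length, t.val + 1 < l.length → Transfer A B l[t] l[cnext t]) :
    IsLoop A (transferLoop A B l) := by
  have hinj : Function.Injective (transferLoop A B l).vtx := List.nodup_iff_injective_get.1 hl
  have htail : ∀ t d, (transferLoop A B l).dem t = some d → A d = (transferLoop A B l).vtx t :=
    fun t d h => (transferLoop_dem_eq_some h).1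
  have hlast : ∀ t, (transferLoop A B l).dem t = none → t.val + 1 = l.length := fun t h => by
    by_contra hne
    exact not_transfer_of_transferLoop_dem_eq_none h (hT t (by omega))
  exact ⟨h2, hinj, htail, fun t t' d h h' => hinj ((htail t d h).symm.trans (htail t' d h')),
    fun t t' h h' => Fin.ext (by have := hlast t h; have := hlast t' h'; omega)⟩

variable [Fintype D] [DecidableEq S] {A B : D → S}

lemma exists_transfer_from_of_occ_le {u v : S} (hv : occ B v ≤ occ A v) (h : Transfer A B u v) :
    ∃ w, Transfer A B v w := by
  by_contra hno
  obtain ⟨huv, d, rfl, rfl⟩ := h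
  have hsub : univ.filter (fun d' => A d' = B d) ⊂ univ.filter (fun d' => B d' = B d) := by
    refine (ssubset_iff_of_subset fun d' hd' => ?_).2 ⟨d, by simp, by simpa using huv⟩
    simp only [mem_filter, mem_univ, true_and] at hd' ⊢
    by_contra hne
    exact hno ⟨_, fun h => hne h.symm, d', hd', rfl⟩
  exact absurd (card_lt_card hsub) (not_lt.2 hv)

lemma exists_transfer_to_of_occ_le {u v : S} (hu : occ A u ≤ occ B u) (h : Transfer A B u v) :
    ∃ w, Transfer A B w u :=
  (exists_transfer_from_of_occ_le hu h.swap).imp fun _ hw => hw.swap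

variable [Fintype S]

theorem exists_loop_toward (hAB : A ≠ B) : ∃ L : Loop S D, IsLoop A L ∧
    (∀ t d, L.dem t = some d → B d = L.vtx (cnext t)) ∧
    ∀ t, L.dem t = none →
      occ B (L.vtx (cnext t)) < occ A (L.vtx (cnext t)) ∧ occ A (L.vtx t) < occ B (L.vtx t) := by
  obtain ⟨d, hd⟩ := Function.ne_iff.1 hAB
  have hB : ∀ l t d, (transferLoop A B l).dem t = some d →
      B d = (transferLoop A B l).vtx (cnext t) := fun _ _ _ h => (transferLoop_dem_eq_some h).2
  rcases exists_isSimpleCycle_or_path (R := Transfer A B) (X := fun s => occ B s < occ A s)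
      (Y := fun s => occ A s < occ B s) (fun _ h => h.1 rfl)
      (fun _ _ h hY => exists_transfer_from_of_occ_le (not_lt.1 hY) h)
      (fun _ _ h hX => exists_transfer_to_of_occ_le (not_lt.1 hX) h)
      (⟨hd, d, rfl, rfl⟩ : Transfer A B (A d) (B d))
    with ⟨l, hl, hc, h2, hclose⟩ | ⟨l, hl, hc, h2, hX, hY⟩
  · have hT : ∀ t : Fin l.length, Transfer A B l[t] l[cnext t] := by
      intro t
      by_cases ht : t.val + 1 < l.length
      · exact hc.rel_getElem_cnext t ht
      · obtain ⟨h0, hlast⟩ := getElem_cnext_of_val_add_one_eq (t := t) (by omega)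
        rwa [h0, hlast]
    exact ⟨transferLoop A B l, isLoop_transferLoop hl h2 fun t _ => hT t, hB l,
      fun t h => absurd (hT t) (not_transfer_of_transferLoop_dem_eq_none h)⟩
  · refine ⟨transferLoop A B l, isLoop_transferLoop hl h2 hc.rel_getElem_cnext, hB l,
      fun (t : Fin l.length) h => ?_⟩
    have ht : t.val + 1 = l.length := by
      by_contra hne
      exact not_transfer_of_transferLoop_dem_eq_none h (hc.rel_getElem_cnext t (by omega))
    obtain ⟨h0, hlast⟩ := getElem_cnext_of_val_add_one_eq ht
    have hends : occ B l[cnext t] < occ A l[cnext t] ∧ occ A l[t] < occ B l[t] := by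
      rw [h0, hlast]
      exact ⟨hX, hY⟩
    exact hends

end Extraction

section Optimality

variable {D S : Type*} [DecidableEq D]

def revertOn (A B : D → S) (L : Loop S D) : D → S := fun d =>
  if ∃ t, L.dem t = some d then A d else B d

variable {A B : D → S} {L : Loop S D}

lemma isLoop_revertOn (hL : IsLoop A L) : IsLoop (revertOn A B L) L :=
  ⟨hL.1, hL.2.1, fun t d h => by rw [revertOn, if_pos ⟨t, h⟩]; exact hL.2.2.1 t d h, hL.2.2.2⟩

lemma removeLoop_revertOn (hL : IsLoop A L)
    (hB : ∀ t d, L.dem t = some d → B d = L.vtx (cnext t)) : removeLoop (revertOn A B L) L = B := by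
  funext d
  by_cases hd : ∃ t, L.dem t = some d
  · obtain ⟨t, ht⟩ := hd
    rw [removeLoop_of_dem_eq_some (isLoop_revertOn hL) ht, hB t d ht]
  · rw [removeLoop_of_forall_ne (not_exists.1 hd), revertOn, if_neg hd]

variable [Fintype D] [DecidableEq S]

lemma card_ne_revertOn_lt (hL : IsLoop A L)
    (hB : ∀ t d, L.dem t = some d → B d = L.vtx (cnext t)) :
    (univ.filter fun d => A d ≠ revertOn A B L d).card < (univ.filter fun d => A d ≠ B d).card := by
  obtain ⟨t, d, ht⟩ := hL.exists_dem_eq_some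
  refine card_lt_card ((ssubset_iff_of_subset fun d' hd' => ?_).2 ⟨d, ?_, ?_⟩)
  · simp only [mem_filter, mem_univ, true_and] at hd' ⊢
    unfold revertOn at hd'
    split_ifs at hd' with h
    · exact absurd rfl hd'
    · exact hd'
  · simpa [hL.2.2.1 t d ht, hB t d ht] using hL.vtx_ne_vtx_cnext t
  · simp [revertOn, show ∃ t, L.dem t = some d from ⟨t, ht⟩]

lemma loopCost_le_loopCost_revertOn {p : S → ℕ → ℤ} (hmono : ∀ s, Monotone (p s))
    (CM : D → S → ℤ) (hL : IsLoop A L) (hB : ∀ t d, L.dem t = some d → B d = L.vtx (cnext t))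
    (hends : ∀ t, L.dem t = none →
      occ B (L.vtx (cnext t)) < occ A (L.vtx (cnext t)) ∧ occ A (L.vtx t) < occ B (L.vtx t)) :
    loopCost CM p A L ≤ loopCost CM p (revertOn A B L) L := by
  rw [loopCost_eq_add, loopCost_eq_add]
  refine add_le_add_right (sum_le_sum fun t ht => ?_) _
  replace ht : L.dem t = none := by simpa using ht
  have hocc := occ_removeLoop_of_dem_eq_none (isLoop_revertOn (B := B) hL) ht
  rw [removeLoop_revertOn hL hB] at hocc
  have hne := hL.vtx_ne_vtx_cnext t
  have htail := hocc (L.vtx t)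
  have hhead := hocc (L.vtx (cnext t))
  simp only [if_pos, if_neg hne, if_neg hne.symm] at htail hhead
  obtain ⟨hX, hY⟩ := hends t ht
  exact sub_le_sub (hmono _ (by omega)) (hmono _ (by omega))

variable [Fintype S]

theorem cost_le_of_forall_loopCost_nonneg {CM : D → S → ℤ} {p : S → ℕ → ℤ}
    (hmono : ∀ s, Monotone (p s)) (hA : ∀ L, IsLoop A L → 0 ≤ loopCost CM p A L) (B : D → S) :
    cost CM p A ≤ cost CM p B := by
  induction hn : (univ.filter fun d => A d ≠ B d).card using Nat.strong_induction_on
    generalizing B with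
  | _ n ih =>
  by_cases hAB : A = B
  · rw [hAB]
  obtain ⟨L, hL, hB, hends⟩ := exists_loop_toward hAB
  set A' := revertOn A B L
  calc cost CM p A ≤ cost CM p A' := ih _ (hn ▸ card_ne_revertOn_lt hL hB) A' rfl
    _ ≤ cost CM p A' + loopCost CM p A L := le_add_of_nonneg_right (hA L hL)
    _ ≤ cost CM p A' + loopCost CM p A' L :=
      add_le_add_right (loopCost_le_loopCost_revertOn hmono CM hL hB hends) _
    _ = cost CM p B := by rw [← cost_removeLoop (isLoop_revertOn hL), removeLoop_revertOn hL hB]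

end Optimality

/-- An allotment `A` of an LBDD instance is optimal if and only if
`A` does not induce any negative loop. -/
theorem optimal_iff_no_negative_loop
    (D S : Type) [Fintype D] [DecidableEq D] [Fintype S] [DecidableEq S]
    (CM : D → S → ℤ) (c : S → ℕ) (p : S → ℕ → ℤ)
    (hp0 : ∀ s j, j ≤ c s → p s j = 0)
    (hppos : ∀ s j, c s < j → 0 < p s j)
    (hpmono : ∀ s j, c s < j → p s j ≤ p s (j + 1))
    (A : D → S) :
    (∀ B : D → S, cost CM p A ≤ cost CM p B) ↔ ¬ InducesNegLoop CM p A := by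
  refine ⟨fun hopt ⟨L, hL, hneg⟩ => ?_, fun hno => ?_⟩
  · have := hopt (removeLoop A L)
    rw [cost_removeLoop hL] at this
    omega
  · exact cost_le_of_forall_loopCost_nonneg
      (fun s => monotone_of_eq_zero_of_pos_of_le_succ (hp0 s) (hppos s) (hpmono s))
      (fun L hL => not_lt.1 fun hneg => hno ⟨L, hL, hneg⟩)
end

section
/- Let A be an allotment and let C be a loop of A of type (i), i.e., a directed cycle of transfer edges of Γ(A) on pairwise distinct service centers with pairwise distinct demand units. Let A' be the allotment obtained by removing C from A. Then o_s(A') = o_s(A) for every s ∈ S, and Cost(A') = Cost(A) + cost(C). In particular, if cost(C) < 0 then A is not optimal. -/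
open Finset

/-- removing a type (i) loop (a directed cycle of transfer edges on
pairwise distinct service centers with pairwise distinct demand units) preserves
all occupancies, changes the cost by the cost of the cycle, and in particular if
the cycle has negative cost then `A` is not optimal. -/
theorem remove_cycle_from_allotment
    (D S : Type) [Fintype D] [DecidableEq D] [Fintype S] [DecidableEq S]
    (CM : D → S → ℤ) (c : S → ℕ) (p : S → ℕ → ℤ)
    (hp0 : ∀ s j, j ≤ c s → p s j = 0)
    (hppos : ∀ s j, c s < j → 0 < p s j)
    (hpmono : ∀ s j, c s < j → p s j ≤ p s (j + 1))
    (A : D → S) (L : Loop S D) (hL : IsLoop A L)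
    (hcyc : ∀ t, L.dem t ≠ none) :
    (∀ s, occ (removeLoop A L) s = occ A s) ∧
    cost CM p (removeLoop A L) = cost CM p A + loopCost CM p A L ∧
    (loopCost CM p A L < 0 → ¬ (∀ B : D → S, cost CM p A ≤ cost CM p B)) := by
  obtain ⟨hm2, hvinj, hA, hdinj, -⟩ := hL
  have hmpos : 0 < L.m := by omega
  have hex : ∀ t, ∃ d, L.dem t = some d := by
    intro t
    cases h : L.dem t with
    | none => exact absurd h (hcyc t)
    | some d => exact ⟨d, rfl⟩
  choose g hgd using hex
  have hginj : Function.Injective g := by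
    intro t t' h
    exact hdinj t t' (g t) (hgd t) (h ▸ hgd t')
  have hAg : ∀ t, A (g t) = L.vtx t := fun t => hA t (g t) (hgd t)
  have hA'g : ∀ t, removeLoop A L (g t) = L.vtx (cnext t) := by
    intro t
    have h : ∃ t', L.dem t' = some (g t) := ⟨t, hgd t⟩
    rw [removeLoop, dif_pos h]
    have hc := Classical.choose_spec h
    have : Classical.choose h = t := hdinj _ _ _ hc (hgd t)
    rw [this]
  have hA'not : ∀ d, (∀ t, g t ≠ d) → removeLoop A L d = A d := by
    intro d hd
    rw [removeLoop, dif_neg]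
    rintro ⟨t, ht⟩
    rw [hgd t] at ht
    exact hd t (Option.some.inj ht)
  -- cnext is injective, hence a permutation of Fin L.m
  have hcinj : Function.Injective (cnext : Fin L.m → Fin L.m) := by
    intro a b hab
    have h1 : (a.val + 1) % L.m = (b.val + 1) % L.m := congrArg Fin.val hab
    have ha := a.isLt; have hb := b.isLt
    have ha1 : a.val + 1 ≤ L.m := ha
    have hb1 : b.val + 1 ≤ L.m := hb
    apply Fin.ext
    rcases eq_or_lt_of_le ha1 with h2 | h2 <;> rcases eq_or_lt_of_le hb1 with h3 | h3
    · omega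
    · rw [h2, Nat.mod_self, Nat.mod_eq_of_lt h3] at h1; omega
    · rw [h3, Nat.mod_self, Nat.mod_eq_of_lt h2] at h1; omega
    · rw [Nat.mod_eq_of_lt h2, Nat.mod_eq_of_lt h3] at h1; omega
  have hcbij : Function.Bijective (cnext : Fin L.m → Fin L.m) :=
    Finite.injective_iff_bijective.mp hcinj
  let e : Equiv.Perm (Fin L.m) := Equiv.ofBijective _ hcbij
  let ι : Fin L.m ↪ D := ⟨g, hginj⟩
  let σ : Equiv.Perm D := e.viaEmbedding ι
  have hcomp : ∀ d, removeLoop A L d = A (σ d) := by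
    intro d
    by_cases h : ∃ t, g t = d
    · obtain ⟨t, rfl⟩ := h
      have : σ (ι t) = ι (e t) := e.viaEmbedding_apply ι t
      simp only [ι] at this
      rw [hA'g t]
      show L.vtx (cnext t) = A (σ (g t))
      rw [show σ (g t) = g (e t) from this, hAg]
      rfl
    · have hr : d ∉ Set.range g := by
        rintro ⟨t, rfl⟩; exact h ⟨t, rfl⟩
      have : σ d = d := e.viaEmbedding_apply_of_notMem ι d hr
      rw [this, hA'not d (fun t ht => h ⟨t, ht⟩)]
  have hocc : ∀ s, occ (removeLoop A L) s = occ A s := by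
    intro s
    unfold occ
    apply Finset.card_bij (fun d _ => σ d)
    · intro a ha
      simp only [Finset.mem_filter, Finset.mem_univ, true_and] at ha ⊢
      rw [← hcomp a]; exact ha
    · intro a _ b _ hab
      exact σ.injective hab
    · intro b hb
      simp only [Finset.mem_filter, Finset.mem_univ, true_and] at hb ⊢
      exact ⟨σ.symm b, by rw [hcomp, σ.apply_symm_apply]; exact hb, σ.apply_symm_apply b⟩
  have hsum : ∑ d, CM d (removeLoop A L d) = (∑ d, CM d (A d)) + loopCost CM p A L := by
    have hdiff : ∑ d, (CM d (removeLoop A L d) - CM d (A d)) = loopCost CM p A L := by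
      rw [← Finset.sum_subset (Finset.subset_univ (Finset.univ.image g))
        (by
          intro x _ hx
          have : ∀ t, g t ≠ x := by
            intro t ht
            exact hx (Finset.mem_image.mpr ⟨t, Finset.mem_univ t, ht⟩)
          rw [hA'not x this]; ring)]
      rw [Finset.sum_image (fun a _ b _ h => hginj h)]
      unfold loopCost
      apply Finset.sum_congr rfl
      intro t _
      rw [hA'g t, hAg t]
      simp [edgeWt, hgd t]
    have := Finset.sum_sub_distrib
      (f := fun d => CM d (removeLoop A L d)) (g := fun d => CM d (A d)) (s := Finset.univ)
    rw [this] at hdiff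
    linarith
  have hcost : cost CM p (removeLoop A L) = cost CM p A + loopCost CM p A L := by
    unfold cost
    rw [hsum]
    have : ∀ s, ∑ j ∈ Finset.Icc 1 (occ (removeLoop A L) s), p s j
        = ∑ j ∈ Finset.Icc 1 (occ A s), p s j := by
      intro s; rw [hocc s]
    rw [Finset.sum_congr rfl (fun s _ => this s)]
    ring
  refine ⟨hocc, hcost, ?_⟩
  intro hneg hopt
  have := hopt (removeLoop A L)
  rw [hcost] at this
  linarith
end

section
/- Let A and B be allotments of the same LBDD instance such that o_s(A) = o_s(B) for every service center s ∈ S. If Cost(B) < Cost(A), then Γ(A) contains a directed cycle of transfer edges, with pairwise distinct demand units, whose total weight is negative; in particular A induces a negative loop. -/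
open Finset

lemma cnext_eq_add_one {m : ℕ} [NeZero m] (t : Fin m) : cnext t = t + 1 := by
  ext
  simp [cnext, Fin.add_def, Fin.val_one', Nat.add_mod]

lemma cnext_ne {m : ℕ} (hm : 2 ≤ m) (t : Fin m) : cnext t ≠ t := by
  intro h
  have hv : (t.val + 1) % m = t.val := congrArg Fin.val h
  rcases Nat.lt_or_ge (t.val + 1) m with h1 | h1
  · rw [Nat.mod_eq_of_lt h1] at hv; omega
  · have h2 : t.val + 1 = m := by have := t.isLt; omega
    rw [h2, Nat.mod_self] at hv; omega

lemma sum_cnext {m : ℕ} [NeZero m] {M : Type*} [AddCommMonoid M] (F : Fin m → M) :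
    (∑ t, F (cnext t)) = ∑ t, F t :=
  Fintype.sum_equiv (Equiv.addRight 1) _ _ (fun t => by rw [cnext_eq_add_one]; rfl)

lemma walk_shrink {D S : Type*} (CM : D → S → ℤ) (A : D → S) :
    ∀ m : ℕ, ∀ σ : Fin m → S, ∀ δ : Fin m → D, Function.Injective δ →
      (∀ t, A (δ t) = σ t) →
      (∑ t, (CM (δ t) (σ (cnext t)) - CM (δ t) (σ t))) < 0 →
      ∃ (m' : ℕ) (σ' : Fin m' → S) (δ' : Fin m' → D), 2 ≤ m' ∧
        Function.Injective δ' ∧ Function.Injective σ' ∧ (∀ t, A (δ' t) = σ' t) ∧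
        (∑ t, (CM (δ' t) (σ' (cnext t)) - CM (δ' t) (σ' t))) < 0 := by
  intro m
  induction m using Nat.strong_induction_on with
  | _ m ih =>
  intro σ δ hδ hA hsum
  by_cases hσ : Function.Injective σ
  · refine ⟨m, σ, δ, ?_, hδ, hσ, hA, hsum⟩
    by_contra h2
    have hm1 : m ≤ 1 := by omega
    have hz : (∑ t, (CM (δ t) (σ (cnext t)) - CM (δ t) (σ t))) = 0 := by
      apply Finset.sum_eq_zero
      intro t _
      have ht : cnext t = t := by
        have hm0 : m = 1 := le_antisymm hm1 t.pos
        subst hm0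
        exact Subsingleton.elim _ _
      rw [ht]; ring
    rw [hz] at hsum
    exact absurd hsum (by norm_num)
  · unfold Function.Injective at hσ
    push_neg at hσ
    obtain ⟨a, b, hab, hne⟩ := hσ
    haveI : NeZero m := ⟨a.pos.ne'⟩
    set σ₁ : Fin m → S := fun t => σ (t + a) with hσ₁def
    set δ₁ : Fin m → D := fun t => δ (t + a) with hδ₁def
    set f₁ : Fin m → ℤ := fun t => CM (δ₁ t) (σ₁ (cnext t)) - CM (δ₁ t) (σ₁ t) with hf₁def
    set c : Fin m := b - a with hcdef
    have hc0 : c ≠ 0 := by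
      intro h
      exact hne (sub_eq_zero.mp h).symm
    have hσc : σ₁ c = σ₁ 0 := by
      show σ (b - a + a) = σ (0 + a)
      rw [sub_add_cancel, zero_add, hab]
    have hδ₁ : Function.Injective δ₁ := fun x y h => by
      have := hδ h
      simpa using congrArg (· - a) this
    have hA₁ : ∀ t, A (δ₁ t) = σ₁ t := fun t => hA (t + a)
    have hrot : (∑ t, f₁ t) = ∑ t, (CM (δ t) (σ (cnext t)) - CM (δ t) (σ t)) := by
      apply Fintype.sum_equiv (Equiv.addRight a)
      intro t
      have h1 : cnext t + a = cnext (t + a) := by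
        rw [cnext_eq_add_one, cnext_eq_add_one]
        abel
      show CM (δ (t + a)) (σ (cnext t + a)) - CM (δ (t + a)) (σ (t + a)) = _
      rw [h1]
      rfl
    have hsum₁ : (∑ t, f₁ t) < 0 := by rw [hrot]; exact hsum
    set k : ℕ := c.val with hkdef
    have hk0 : 0 < k := Nat.pos_of_ne_zero (fun h => hc0 (Fin.ext (by simp [← hkdef, h])))
    have hkm : k < m := c.isLt
    set g : ℕ → ℤ := fun i => if h : i < m then f₁ ⟨i, h⟩ else 0 with hgdef
    have hg : ∀ t : Fin m, f₁ t = g t.val := by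
      intro t; simp [hgdef, t.isLt]
    have hsplit : (∑ t, f₁ t) =
        (∑ i ∈ Finset.range k, g i) + ∑ i ∈ Finset.range (m - k), g (k + i) := by
      have h1 : (∑ t : Fin m, f₁ t) = ∑ i ∈ Finset.range m, g i := by
        rw [Finset.sum_congr rfl (fun t _ => hg t)]
        exact (Fin.sum_univ_eq_sum_range g m)
      rw [h1, ← Finset.sum_range_add_sum_Ico g hkm.le, Finset.sum_Ico_eq_sum_range]
    have hw1 : (∑ i ∈ Finset.range k, g i) < 0 ∨ (∑ i ∈ Finset.range (m - k), g (k + i)) < 0 := by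
      rw [hsplit] at hsum₁; by_contra h; push_neg at h; omega
    rcases hw1 with hw | hw
    · -- walk of length k
      set emb : Fin k → Fin m := fun i => ⟨i.val, i.isLt.trans hkm⟩ with hembdef
      set σ' : Fin k → S := fun i => σ₁ (emb i) with hσ'def
      set δ' : Fin k → D := fun i => δ₁ (emb i) with hδ'def
      have hedge : ∀ i : Fin k, σ₁ (emb (cnext i)) = σ₁ (cnext (emb i)) := by
        intro i
        rcases Nat.lt_or_ge (i.val + 1) k with h1 | h1
        · apply congrArg σ₁
          apply Fin.ext
          show (i.val + 1) % k = (i.val + 1) % m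
          rw [Nat.mod_eq_of_lt h1, Nat.mod_eq_of_lt (h1.trans hkm)]
        · have h2 : i.val + 1 = k := by have := i.isLt; omega
          have e1 : emb (cnext i) = 0 := by
            apply Fin.ext
            show (i.val + 1) % k = (0 : Fin m).val
            rw [h2, Nat.mod_self, Fin.val_zero]
          have e2 : cnext (emb i) = c := by
            apply Fin.ext
            show (i.val + 1) % m = k
            rw [h2, Nat.mod_eq_of_lt hkm]
          rw [e1, e2, hσc]
      have hsum' : (∑ i : Fin k, (CM (δ' i) (σ' (cnext i)) - CM (δ' i) (σ' i))) =
          ∑ i ∈ Finset.range k, g i := by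
        rw [← Fin.sum_univ_eq_sum_range g k]
        apply Finset.sum_congr rfl
        intro i _
        have h3 : g i.val = f₁ (emb i) := by
          simp only [hgdef]
          rw [dif_pos (i.isLt.trans hkm)]
        rw [h3, hf₁def]
        show CM (δ' i) (σ' (cnext i)) - CM (δ' i) (σ' i)
            = CM (δ₁ (emb i)) (σ₁ (cnext (emb i))) - CM (δ₁ (emb i)) (σ₁ (emb i))
        rw [hσ'def, hδ'def]
        simp only []
        rw [hedge i]
      refine ih k hkm σ' δ' ?_ (fun i => hA₁ (emb i)) (by rw [hsum']; exact hw)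
      intro x y h
      have h4 := hδ₁ h
      have : (emb x).val = (emb y).val := congrArg Fin.val h4
      exact Fin.ext this
    · -- walk of length m - k
      have hmk0 : 0 < m - k := by omega
      set emb : Fin (m - k) → Fin m := fun j => ⟨k + j.val, by omega⟩ with hembdef
      set σ' : Fin (m - k) → S := fun j => σ₁ (emb j) with hσ'def
      set δ' : Fin (m - k) → D := fun j => δ₁ (emb j) with hδ'def
      have hedge : ∀ j : Fin (m - k), σ₁ (emb (cnext j)) = σ₁ (cnext (emb j)) := by
        intro j
        rcases Nat.lt_or_ge (j.val + 1) (m - k) with h1 | h1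
        · apply congrArg σ₁
          apply Fin.ext
          show k + (j.val + 1) % (m - k) = (k + j.val + 1) % m
          rw [Nat.mod_eq_of_lt h1, Nat.mod_eq_of_lt (by omega)]
          omega
        · have h2 : j.val + 1 = m - k := by have := j.isLt; omega
          have e1 : emb (cnext j) = c := by
            apply Fin.ext
            show k + (j.val + 1) % (m - k) = k
            rw [h2, Nat.mod_self]
            omega
          have e2 : cnext (emb j) = 0 := by
            apply Fin.ext
            show (k + j.val + 1) % m = (0 : Fin m).val
            have h3 : k + j.val + 1 = m := by omega
            rw [h3, Nat.mod_self, Fin.val_zero]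
          rw [e1, e2, hσc]
      have hsum' : (∑ j : Fin (m - k), (CM (δ' j) (σ' (cnext j)) - CM (δ' j) (σ' j))) =
          ∑ i ∈ Finset.range (m - k), g (k + i) := by
        rw [← Fin.sum_univ_eq_sum_range (fun i => g (k + i)) (m - k)]
        apply Finset.sum_congr rfl
        intro j _
        have h3 : g (k + j.val) = f₁ (emb j) := by
          simp only [hgdef]
          rw [dif_pos (show k + j.val < m by omega)]
        show CM (δ' j) (σ' (cnext j)) - CM (δ' j) (σ' j) = g (k + j.val)
        rw [h3, hf₁def]
        show CM (δ' j) (σ' (cnext j)) - CM (δ' j) (σ' j)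
            = CM (δ₁ (emb j)) (σ₁ (cnext (emb j))) - CM (δ₁ (emb j)) (σ₁ (emb j))
        rw [hσ'def, hδ'def]
        simp only []
        rw [hedge j]
      refine ih (m - k) (by omega) σ' δ' ?_ (fun j => hA₁ (emb j)) (by rw [hsum']; exact hw)
      intro x y h
      have h4 := hδ₁ h
      have h5 : (emb x).val = (emb y).val := congrArg Fin.val h4
      have h6 : k + x.val = k + y.val := h5
      exact Fin.ext (by omega)

lemma key {D S : Type} [Fintype D] [DecidableEq D] [Fintype S] [DecidableEq S]
    (CM : D → S → ℤ) (A : D → S) :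
    ∀ n : ℕ, ∀ B : D → S, (Finset.univ.filter fun d => B d ≠ A d).card ≤ n →
      (∀ s, occ A s = occ B s) →
      (∑ d, CM d (B d)) < (∑ d, CM d (A d)) →
      ∃ (m : ℕ) (σ : Fin m → S) (δ : Fin m → D), 0 < m ∧
        Function.Injective δ ∧ (∀ t, A (δ t) = σ t) ∧
        (∑ t, (CM (δ t) (σ (cnext t)) - CM (δ t) (σ t))) < 0 := by
  intro n
  induction n with
  | zero =>
    intro B hcard hocc hlt
    exfalso
    have hBA : ∀ d, B d = A d := by
      intro d
      by_contra hd
      have hmem : d ∈ (Finset.univ.filter fun d => B d ≠ A d) :=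
        Finset.mem_filter.mpr ⟨Finset.mem_univ d, hd⟩
      have := Finset.card_pos.mpr ⟨d, hmem⟩
      omega
    have heq : (∑ d, CM d (B d)) = ∑ d, CM d (A d) :=
      Finset.sum_congr rfl fun d _ => by rw [hBA d]
    linarith
  | succ n ih =>
    intro B hcard hocc hlt
    have hTne : (Finset.univ.filter fun d => B d ≠ A d).Nonempty := by
      rcases Finset.eq_empty_or_nonempty (Finset.univ.filter fun d => B d ≠ A d) with h | h
      · exfalso
        have hBA : ∀ d, B d = A d := by
          intro d
          by_contra hd
          have hmem : d ∈ (Finset.univ.filter fun d => B d ≠ A d) :=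
            Finset.mem_filter.mpr ⟨Finset.mem_univ d, hd⟩
          rw [h] at hmem
          exact absurd hmem (Finset.notMem_empty d)
        have heq : (∑ d, CM d (B d)) = ∑ d, CM d (A d) :=
          Finset.sum_congr rfl fun d _ => by rw [hBA d]
        linarith
      · exact h
    obtain ⟨d0, hd0mem⟩ := hTne
    have hd0 : B d0 ≠ A d0 := (Finset.mem_filter.mp hd0mem).2
    -- construct the permutation
    have hcards : ∀ s, Fintype.card {d // B d = s} = Fintype.card {d // A d = s} := by
      intro s
      rw [Fintype.card_subtype, Fintype.card_subtype]
      exact (hocc s).symm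
    let e : ∀ s, {d // B d = s} ≃ {d // A d = s} := fun s => Fintype.equivOfCardEq (hcards s)
    let π : Equiv.Perm D :=
      (Equiv.sigmaFiberEquiv B).symm.trans ((Equiv.sigmaCongrRight e).trans (Equiv.sigmaFiberEquiv A))
    have hπ : ∀ d, A (π d) = B d := fun d => (e (B d) ⟨d, rfl⟩).2
    have hfix : π d0 ≠ d0 := by
      intro h
      have h2 := hπ d0
      rw [h] at h2
      exact hd0 h2.symm
    -- minimal period of d0 under π
    have hex : ∃ nn, 0 < nn ∧ (π ^ nn) d0 = d0 :=
      ⟨orderOf π, orderOf_pos π, by rw [pow_orderOf_eq_one]; rfl⟩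
    set m := Nat.find hex with hmdef
    have hmspec := Nat.find_spec hex
    have hm0 : 0 < m := hmspec.1
    have hmper : (π ^ m) d0 = d0 := hmspec.2
    have hmin : ∀ i, 0 < i → i < m → (π ^ i) d0 ≠ d0 := by
      intro i hi0 him hcon
      exact Nat.find_min hex him ⟨hi0, hcon⟩
    haveI : NeZero m := ⟨hm0.ne'⟩
    set δ : Fin m → D := fun t => (π ^ t.val) d0 with hδdef
    have hδ0 : δ ⟨0, hm0⟩ = d0 := by simp [hδdef]
    have hδinj : Function.Injective δ := by
      have keyinj : ∀ i j : Fin m, i.val ≤ j.val → δ i = δ j → i = j := by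
        intro i j hij h
        by_contra hne2
        have hlt2 : i.val < j.val := lt_of_le_of_ne hij (fun hh => hne2 (Fin.ext hh))
        have hcomm : π ^ i.val * π ^ (j.val - i.val) = π ^ j.val := by
          rw [← pow_add]; congr 1; omega
        have h4 : (π ^ i.val) ((π ^ (j.val - i.val)) d0) = (π ^ i.val) d0 := by
          rw [← Equiv.Perm.mul_apply, hcomm]
          exact h.symm
        have h5 : (π ^ (j.val - i.val)) d0 = d0 := (Equiv.injective _) h4
        exact hmin _ (by omega) (by have := j.isLt; omega) h5
      intro x y h
      rcases Nat.le_total x.val y.val with hc | hc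
      · exact keyinj x y hc h
      · exact (keyinj y x hc h.symm).symm
    have hnext : ∀ t, δ (cnext t) = π (δ t) := by
      intro t
      have hR : π ((π ^ t.val) d0) = (π ^ (t.val + 1)) d0 := by
        rw [pow_succ']
        rfl
      show (π ^ ((t.val + 1) % m)) d0 = π ((π ^ t.val) d0)
      rcases Nat.lt_or_ge (t.val + 1) m with h1 | h1
      · rw [Nat.mod_eq_of_lt h1, hR]
      · have h2 : t.val + 1 = m := by have := t.isLt; omega
        rw [hR, h2, Nat.mod_self, pow_zero, hmper]
        rfl
    set σ : Fin m → S := fun t => A (δ t) with hσdef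
    have hσB : ∀ t, σ (cnext t) = B (δ t) := by
      intro t
      show A (δ (cnext t)) = B (δ t)
      rw [hnext t, hπ]
    set O : Finset D := Finset.image δ Finset.univ with hOdef
    have hd0O : d0 ∈ O := Finset.mem_image.mpr ⟨⟨0, hm0⟩, Finset.mem_univ _, hδ0⟩
    set W : ℤ := ∑ t, (CM (δ t) (σ (cnext t)) - CM (δ t) (σ t)) with hWdef
    have hWO : (∑ d ∈ O, (CM d (B d) - CM d (A d))) = W := by
      rw [hOdef, Finset.sum_image (fun x _ y _ h => hδinj h)]
      exact Finset.sum_congr rfl fun t _ => by rw [hσB t]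
    rcases lt_or_ge W 0 with hW | hW
    · exact ⟨m, σ, δ, hm0, hδinj, fun t => rfl, hW⟩
    · -- cancel this orbit and recurse
      set B' : D → S := fun d => if d ∈ O then A d else B d with hB'def
      have hB'O : ∀ d ∈ O, B' d = A d := fun d hd => by simp [hB'def, hd]
      have hB'nO : ∀ d ∉ O, B' d = B d := fun d hd => by simp [hB'def, hd]
      -- occupancy is preserved
      have hoccO : ∀ s, (∑ d ∈ O, (if B d = s then 1 else 0 : ℕ)) =
          ∑ d ∈ O, (if A d = s then 1 else 0 : ℕ) := by
        intro s
        rw [hOdef, Finset.sum_image (fun x _ y _ h => hδinj h),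
          Finset.sum_image (fun x _ y _ h => hδinj h)]
        calc (∑ t, (if B (δ t) = s then 1 else 0 : ℕ))
            = ∑ t, (if σ (cnext t) = s then 1 else 0 : ℕ) :=
              Finset.sum_congr rfl fun t _ => by rw [hσB t]
          _ = ∑ t, (if σ t = s then 1 else 0 : ℕ) :=
              sum_cnext (fun u => if σ u = s then 1 else 0)
          _ = ∑ t, (if A (δ t) = s then 1 else 0 : ℕ) := rfl
      have hfO : Finset.univ.filter (· ∈ O) = O := by
        rw [Finset.filter_mem_eq_inter, Finset.univ_inter]
      have hocc' : ∀ s, occ A s = occ B' s := by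
        intro s
        rw [hocc s, occ, occ, Finset.card_filter, Finset.card_filter]
        have h1 : (∑ d, (if B d = s then 1 else 0 : ℕ)) =
            (∑ d ∈ O, if B d = s then 1 else 0) +
            ∑ d ∈ Finset.univ.filter (· ∉ O), if B d = s then 1 else 0 := by
          rw [← Finset.sum_filter_add_sum_filter_not Finset.univ (· ∈ O)
            (fun d => (if B d = s then 1 else 0 : ℕ)), hfO]
        have h2 : (∑ d, (if B' d = s then 1 else 0 : ℕ)) =
            (∑ d ∈ O, if A d = s then 1 else 0) +
            ∑ d ∈ Finset.univ.filter (· ∉ O), if B d = s then 1 else 0 := by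
          rw [← Finset.sum_filter_add_sum_filter_not Finset.univ (· ∈ O)
            (fun d => (if B' d = s then 1 else 0 : ℕ)), hfO]
          congr 1
          · exact Finset.sum_congr rfl fun d hd => by rw [hB'O d hd]
          · exact Finset.sum_congr rfl fun d hd =>
              by rw [hB'nO d (Finset.mem_filter.mp hd).2]
        rw [h1, h2, hoccO s]
      -- cost strictly decreases or stays; still below A
      have hsplitB : (∑ d, CM d (B d)) =
          (∑ d ∈ O, CM d (B d)) + ∑ d ∈ Finset.univ.filter (· ∉ O), CM d (B d) := by
        rw [← Finset.sum_filter_add_sum_filter_not Finset.univ (· ∈ O)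
          (fun d => CM d (B d)), hfO]
      have hsplitB' : (∑ d, CM d (B' d)) =
          (∑ d ∈ O, CM d (A d)) + ∑ d ∈ Finset.univ.filter (· ∉ O), CM d (B d) := by
        rw [← Finset.sum_filter_add_sum_filter_not Finset.univ (· ∈ O)
          (fun d => CM d (B' d)), hfO]
        congr 1
        · exact Finset.sum_congr rfl fun d hd => by rw [hB'O d hd]
        · exact Finset.sum_congr rfl fun d hd =>
            by rw [hB'nO d (Finset.mem_filter.mp hd).2]
      have hWsub : (∑ d ∈ O, CM d (B d)) - (∑ d ∈ O, CM d (A d)) = W := by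
        rw [← hWO, Finset.sum_sub_distrib]
      have hlt' : (∑ d, CM d (B' d)) < ∑ d, CM d (A d) := by
        rw [hsplitB']
        rw [hsplitB] at hlt
        linarith
      -- the disagreement set shrinks
      have hcard' : (Finset.univ.filter fun d => B' d ≠ A d).card ≤ n := by
        have hsub : (Finset.univ.filter fun d => B' d ≠ A d) ⊆
            (Finset.univ.filter fun d => B d ≠ A d).erase d0 := by
          intro d hd
          have hd2 : B' d ≠ A d := (Finset.mem_filter.mp hd).2
          have hdO : d ∉ O := fun h => hd2 (hB'O d h)
          refine Finset.mem_erase.mpr ⟨fun h => hdO (h ▸ hd0O), ?_⟩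
          refine Finset.mem_filter.mpr ⟨Finset.mem_univ d, ?_⟩
          rw [← hB'nO d hdO]
          exact hd2
        have := Finset.card_le_card hsub
        have := Finset.card_erase_of_mem hd0mem
        omega
      exact ih B' hcard' hocc' hlt'

/-- If allotments `A` and `B` have the same occupancy at every
service center and `Cost(B) < Cost(A)`, then `Γ(A)` contains a directed cycle of
transfer edges with pairwise distinct demand units of negative total weight; in
particular `A` induces a negative loop. -/
theorem equal_occupancies_cheaper_gives_negative_cycle
    (D S : Type) [Fintype D] [DecidableEq D] [Fintype S] [DecidableEq S]
    (CM : D → S → ℤ) (c : S → ℕ) (p : S → ℕ → ℤ)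
    (hp0 : ∀ s j, j ≤ c s → p s j = 0)
    (hppos : ∀ s j, c s < j → 0 < p s j)
    (hpmono : ∀ s j, c s < j → p s j ≤ p s (j + 1))
    (A B : D → S)
    (hocc : ∀ s, occ A s = occ B s)
    (hlt : cost CM p B < cost CM p A) :
    (∃ (m : ℕ) (σ : Fin m → S) (δ : Fin m → D), 0 < m ∧
        Function.Injective δ ∧ (∀ t, A (δ t) = σ t) ∧ (∀ t, σ t ≠ σ (cnext t)) ∧
        (∑ t, (CM (δ t) (σ (cnext t)) - CM (δ t) (σ t))) < 0) ∧
    InducesNegLoop CM p A := by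
  have hpen : (∑ s, ∑ j ∈ Finset.Icc 1 (occ B s), p s j) =
      ∑ s, ∑ j ∈ Finset.Icc 1 (occ A s), p s j :=
    Finset.sum_congr rfl fun s _ => by rw [hocc s]
  have hCM : (∑ d, CM d (B d)) < ∑ d, CM d (A d) := by
    simp only [cost] at hlt
    linarith
  obtain ⟨m0, σ0, δ0, hm0, hδ0inj, hA0, hsum0⟩ :=
    key CM A (Finset.univ.filter fun d => B d ≠ A d).card B le_rfl hocc hCM
  obtain ⟨m, σ, δ, hm2, hδinj, hσinj, hA, hsum⟩ :=
    walk_shrink CM A m0 σ0 δ0 hδ0inj hA0 hsum0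
  constructor
  · exact ⟨m, σ, δ, by omega, hδinj, hA,
      fun t h => (cnext_ne hm2 t) (hσinj h).symm, hsum⟩
  · refine ⟨⟨m, σ, fun t => some (δ t)⟩, ⟨hm2, hσinj, ?_, ?_, ?_⟩, ?_⟩
    · intro t d h
      rw [← Option.some_inj.mp h]
      exact hA t
    · intro t t' d h h'
      exact hδinj (by rw [Option.some_inj.mp h, Option.some_inj.mp h'])
    · intro t t' h
      simp at h
    · show (∑ t, edgeWt CM p A ⟨m, σ, fun t => some (δ t)⟩ t) < 0
      have he : ∀ t : Fin m, edgeWt CM p A ⟨m, σ, fun t => some (δ t)⟩ t =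
          CM (δ t) (σ (cnext t)) - CM (δ t) (σ t) := fun t => rfl
      rw [Finset.sum_congr rfl fun t _ => he t]
      exact hsum
end

section
/- Let L be an LBDD instance with |D| ≥ Σ_{s∈S} c_s, under the no-overload constraint: feasible solutions are partial allotments A (functions from a subset of D to S) with o_s(A) = c_s for every s ∈ S, and the objective is to minimize Σ_{d ∈ dom(A)} CM(d, A(d)). Let max be the largest entry of CM and let M = (|D|+1)·(max+2). Construct the instance L1 on demand set D and service centers S ∪ {s₀} (s₀ ∉ S) by setting CM₁(d, s) = CM(d, s) for s ∈ S, CM₁(d, s₀) = max + 1 for all d ∈ D, keeping the capacities c_s for s ∈ S, setting c_{s₀} = 0, and setting penalties p_s(j) = M for j > c_s (s ∈ S) and p_{s₀}(j) = 0 for all j. Then every optimal (total) allotment A1 for L1 assigns exactly c_s demand units to each s ∈ S (and the remaining demand units to s₀), and the partial allotment A obtained by restricting A1 to the demand units assigned within S is an optimal solution of the no-overload instance L. -/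
open Finset

/-- Objective value of a partial allotment `A : D → Option S` in the no-overload
setting: the sum of assignment costs over the assigned demand units. -/
def pcost {D S : Type*} [Fintype D] (CM : D → S → ℤ) (A : D → Option S) : ℤ :=
  ∑ d, (A d).elim 0 (CM d)

section Aux

set_option linter.unusedSectionVars false

variable {D S : Type*} [Fintype D] [DecidableEq D] [Fintype S] [DecidableEq S]

lemma occ_eq_sum (A : D → S) (s : S) :
    occ A s = ∑ x, (if A x = s then 1 else 0) := by
  rw [occ, Finset.card_filter]

lemma occ_update (A : D → S) (d : D) (v : S) (s : S) :
    occ (Function.update A d v) s + (if A d = s then 1 else 0)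
      = occ A s + (if v = s then 1 else 0) := by
  have h1 : (fun x => if Function.update A d v x = s then (1:ℕ) else 0)
      = Function.update (fun x => if A x = s then 1 else 0) d (if v = s then 1 else 0) := by
    funext x
    by_cases hx : x = d <;> simp [hx, Function.update]
  rw [occ_eq_sum, occ_eq_sum, h1, Finset.sum_update_of_mem (Finset.mem_univ d),
    ← Finset.sum_erase_add Finset.univ _ (Finset.mem_univ d),
    Finset.sdiff_singleton_eq_erase]
  ring

lemma occ_update_eqd (A : D → S) (d : D) (v : S) (hne : A d ≠ v) :
    occ (Function.update A d v) (A d) + 1 = occ A (A d) := by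
  have := occ_update A d v (A d)
  simpa [Ne.symm hne] using this

lemma occ_update_eqv (A : D → S) (d : D) (v : S) (hne : A d ≠ v) :
    occ (Function.update A d v) v = occ A v + 1 := by
  have := occ_update A d v v
  simpa [hne] using this

lemma occ_update_other (A : D → S) (d : D) (v : S) (s : S) (h1 : s ≠ A d) (h2 : s ≠ v) :
    occ (Function.update A d v) s = occ A s := by
  have := occ_update A d v s
  simpa [Ne.symm h1, Ne.symm h2] using this

lemma occ_pos_exists (A : D → S) (s : S) (h : 0 < occ A s) : ∃ d, A d = s := by
  obtain ⟨d, hd⟩ := Finset.card_pos.mp h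
  exact ⟨d, (Finset.mem_filter.mp hd).2⟩

lemma sum_occ (A : D → S) : ∑ s, occ A s = Fintype.card D := by
  rw [← Finset.card_univ]
  exact (Finset.card_eq_sum_card_fiberwise (fun x _ => Finset.mem_univ (A x))).symm

lemma cost_update (CM : D → S → ℤ) (p : S → ℕ → ℤ) (A : D → S) (d : D) (v : S)
    (hne : A d ≠ v) :
    cost CM p (Function.update A d v)
      = cost CM p A + (CM d v - CM d (A d))
        + (p v (occ A v + 1) - p (A d) (occ A (A d))) := by
  unfold cost
  have h1 : (fun x => CM x (Function.update A d v x))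
      = Function.update (fun x => CM x (A x)) d (CM d v) := by
    funext x
    by_cases hx : x = d <;> simp [hx, Function.update]
  have hsum1 : ∑ x, CM x (Function.update A d v x)
      = (∑ x, CM x (A x)) + (CM d v - CM d (A d)) := by
    rw [h1, Finset.sum_update_of_mem (Finset.mem_univ d),
      ← Finset.sum_erase_add Finset.univ _ (Finset.mem_univ d),
      Finset.sdiff_singleton_eq_erase]
    ring
  have hpen : ∑ s, ∑ j ∈ Finset.Icc 1 (occ (Function.update A d v) s), p s j
      = (∑ s, ∑ j ∈ Finset.Icc 1 (occ A s), p s j)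
        + (p v (occ A v + 1) - p (A d) (occ A (A d))) := by
    have hdiff : ∀ s : S, (∑ j ∈ Finset.Icc 1 (occ (Function.update A d v) s), p s j)
        - (∑ j ∈ Finset.Icc 1 (occ A s), p s j)
        = (if s = v then p v (occ A v + 1) else 0)
          - (if s = A d then p (A d) (occ A (A d)) else 0) := by
      intro s
      by_cases hsv : s = v
      · subst hsv
        rw [occ_update_eqv A d s hne,
          Finset.sum_Icc_succ_top (Nat.le_add_left 1 _)]
        have hAd : ¬ (s = A d) := fun h => hne h.symm
        simp [hAd]
      · by_cases hsd : s = A d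
        · have h2 := occ_update_eqd A d v hne
          rw [hsd, ← h2, Finset.sum_Icc_succ_top (Nat.le_add_left 1 _)]
          have hAdv : ¬ (A d = v) := hne
          simp [hAdv]
        · rw [occ_update_other A d v s hsd hsv]
          simp [hsv, hsd]
    have hs := Finset.sum_congr rfl (fun s (_ : s ∈ Finset.univ) => hdiff s)
    rw [Finset.sum_sub_distrib, Finset.sum_sub_distrib] at hs
    simp only [Finset.sum_ite_eq' Finset.univ, Finset.mem_univ, if_true] at hs
    linarith
  rw [hsum1, hpen]
  ring

end Aux

/-- reduction of the no-overload LBDD instance `L` to the instance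
`L1` with the extra service center `s₀` (modelled as `none : Option S`, so a
total allotment of `L1` is a map `D → Option S`, which is at the same time the
partial allotment for `L` obtained by restricting to the demand units assigned
within `S`).  Here `mx` is the largest entry of `CM`, `M = (|D|+1)(mx+2)`,
`CM₁ d s₀ = mx + 1`, `c_{s₀} = 0`, `p₁ s₀ ≡ 0`, and for `s ∈ S` the penalty is
`M` beyond the capacity `c s`.  Every optimal total allotment `A1` of `L1` fills
each `s ∈ S` exactly to capacity, and its restriction is an optimal feasible
partial allotment for the no-overload instance `L`. -/
theorem no_overload_reduction_optimal
    (D S : Type) [Fintype D] [DecidableEq D] [Fintype S] [DecidableEq S]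
    (CM : D → S → ℤ) (c : S → ℕ) (mx M : ℤ)
    (hCMnonneg : ∀ d s, 0 ≤ CM d s)
    (hmx_le : ∀ d s, CM d s ≤ mx)
    (hmx_mem : ∃ d s, CM d s = mx)
    (hcap : (∑ s, c s) ≤ Fintype.card D)
    (hM : M = ((Fintype.card D : ℤ) + 1) * (mx + 2))
    (CM₁ : D → Option S → ℤ)
    (hCM₁n : ∀ d, CM₁ d none = mx + 1)
    (hCM₁s : ∀ d s, CM₁ d (some s) = CM d s)
    (c₁ : Option S → ℕ)
    (hc₁n : c₁ none = 0)
    (hc₁s : ∀ s, c₁ (some s) = c s)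
    (p₁ : Option S → ℕ → ℤ)
    (hp₁n : ∀ j, p₁ none j = 0)
    (hp₁s : ∀ s j, p₁ (some s) j = if j ≤ c s then 0 else M)
    (A1 : D → Option S)
    (hopt : ∀ B : D → Option S, cost CM₁ p₁ A1 ≤ cost CM₁ p₁ B) :
    (∀ s : S, occ A1 (some s) = c s) ∧
    (∀ B : D → Option S, (∀ s : S, occ B (some s) = c s) → pcost CM A1 ≤ pcost CM B) := by
  classical
  have hmx0 : 0 ≤ mx := by
    obtain ⟨d, s, h⟩ := hmx_mem; rw [← h]; exact hCMnonneg d s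
  have hcard0 : (0:ℤ) ≤ (Fintype.card D : ℤ) := Int.natCast_nonneg _
  have hMbig : mx + 2 ≤ M := by
    rw [hM]; nlinarith
  have hle : ∀ s : S, occ A1 (some s) ≤ c s := by
    intro s
    by_contra hgt
    push_neg at hgt
    have hpos : 0 < occ A1 (some s) := lt_of_le_of_lt (Nat.zero_le _) hgt
    obtain ⟨d, hd⟩ := occ_pos_exists A1 (some s) hpos
    have hne : A1 d ≠ (none : Option S) := by simp [hd]
    have h1 := hopt (Function.update A1 d none)
    rw [cost_update CM₁ p₁ A1 d none hne, hd, hCM₁n d, hCM₁s d s, hp₁n,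
      hp₁s s (occ A1 (some s)), if_neg (by omega)] at h1
    have h2 := hCMnonneg d s
    linarith
  have heq : ∀ s : S, occ A1 (some s) = c s := by
    intro s
    by_contra hne'
    have hlt : occ A1 (some s) < c s := lt_of_le_of_ne (hle s) hne'
    have hsum : occ A1 none + ∑ s : S, occ A1 (some s) = Fintype.card D := by
      have h := sum_occ A1
      rwa [Fintype.sum_option] at h
    have hslt : ∑ s : S, occ A1 (some s) < ∑ s : S, c s :=
      Finset.sum_lt_sum (fun i _ => hle i) ⟨s, Finset.mem_univ s, hlt⟩
    have hpos : 0 < occ A1 none := by omega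
    obtain ⟨d, hd⟩ := occ_pos_exists A1 none hpos
    have hne2 : A1 d ≠ some s := by simp [hd]
    have h1 := hopt (Function.update A1 d (some s))
    rw [cost_update CM₁ p₁ A1 d (some s) hne2, hd, hCM₁n d, hCM₁s d s,
      hp₁n, hp₁s s (occ A1 (some s) + 1), if_pos (by omega)] at h1
    have h2 := hmx_le d s
    linarith
  refine ⟨heq, ?_⟩
  intro B hB
  have key : ∀ (X : D → Option S), (∀ s : S, occ X (some s) ≤ c s) →
      cost CM₁ p₁ X = pcost CM X + (occ X none : ℤ) * (mx + 1) := by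
    intro X hX
    unfold cost pcost
    have hpen : ∀ s' : Option S, ∑ j ∈ Finset.Icc 1 (occ X s'), p₁ s' j = 0 := by
      intro s'
      match s' with
      | none => simp [hp₁n]
      | some s =>
        apply Finset.sum_eq_zero
        intro j hj
        rw [hp₁s, if_pos (le_trans (Finset.mem_Icc.mp hj).2 (hX s))]
    simp only [hpen, Finset.sum_const_zero, add_zero]
    have hterm : ∀ d, CM₁ d (X d) = (X d).elim 0 (CM d) + (if X d = none then mx + 1 else 0) := by
      intro d
      match hXd : X d with
      | none => simp [hCM₁n]
      | some s => simp [hCM₁s]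
    rw [Finset.sum_congr rfl (fun d _ => hterm d), Finset.sum_add_distrib]
    congr 1
    rw [← Finset.sum_filter, Finset.sum_const, occ, nsmul_eq_mul]
  have hnoneEq : occ A1 none = occ B none := by
    have h1 := sum_occ A1
    rw [Fintype.sum_option] at h1
    have h2 := sum_occ B
    rw [Fintype.sum_option] at h2
    have e1 : ∑ s : S, occ A1 (some s) = ∑ s : S, c s :=
      Finset.sum_congr rfl (fun s _ => heq s)
    have e2 : ∑ s : S, occ B (some s) = ∑ s : S, c s :=
      Finset.sum_congr rfl (fun s _ => hB s)
    omega
  have h1 := hopt B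
  rw [key A1 (fun s => le_of_eq (heq s)), key B (fun s => le_of_eq (hB s)), hnoneEq] at h1
  linarith
end
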